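/- Projection into the partial-correctness Hoare logic: for any While statement s, state predicate U and setoid trace predicate P, if ⊢{U} s {P} is derivable in the trace-based Hoare logic, then ⊢p {U} s {Last P} is derivable in the state-based partial-correctness Hoare logic. -/

import Mathlib

/-! A partial-correctness triple cannot mention the initial state, so the induction on the
trace-based derivation proves the stronger claim that from each fixed initial state `ρ`
satisfying `U`, the program derives the postcondition "last state of a finite `P`-trace
starting at `ρ`"; the existential rule over the initial states then gives back `U`.
For a loop, the state-based invariant is `I` together with the property that every end of a
finite iteration from the current state is also the end of a finite iteration from `ρ`. -/

namespace WhileTrace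

/-- Program variables. -/
abbrev Var := ℕ
/-- States assign integer values to variables. -/
abbrev State := Var → ℤ
/-- Arithmetic expressions, modelled by their integer value in each state. -/
abbrev Expr := State → ℤ

/-- State update `σ[x ↦ v]`. -/
def update (σ : State) (x : Var) (v : ℤ) : State := Function.update σ x v

/-- Reading an expression as a boolean: `σ ⊨ e`. -/
def istrue (e : Expr) (σ : State) : Prop := e σ ≠ 0

/-- Traces: nonempty, possibly infinite sequences of states
(a head state together with a possibly infinite sequence of further states). -/
def Trace : Type := State × Stream'.Seq State

/-- The singleton trace `⟨σ⟩`. -/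
def Trace.single (σ : State) : Trace := (σ, Stream'.Seq.nil)

/-- The cons trace `σ :: τ`. -/
def Trace.cons (σ : State) (τ : Trace) : Trace := (σ, Stream'.Seq.cons τ.1 τ.2)

/-- The first state of a trace. -/
def Trace.hd (τ : Trace) : State := τ.1

/-- Bisimilarity of traces `τ ≈ τ'`, as a greatest fixed point:
there is a relation `R` relating the two traces that is consistent with the
coinductive rules `⟨σ⟩ ≈ ⟨σ⟩` and `σ::τ ≈ σ::τ'` whenever `τ ≈ τ'`. -/
def Bisim (τ τ' : Trace) : Prop :=
  ∃ R : Trace → Trace → Prop, R τ τ' ∧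
    ∀ a b, R a b →
      (∃ σ, a = Trace.single σ ∧ b = Trace.single σ) ∨
      (∃ σ a' b', a = Trace.cons σ a' ∧ b = Trace.cons σ b' ∧ R a' b')

/-- Finiteness `τ ↓ σ` : `τ` is finite with last state `σ` (inductive). -/
inductive Converges : Trace → State → Prop
  | single (σ : State) : Converges (Trace.single σ) σ
  | cons (σ' : State) {τ : Trace} {σ : State} :
      Converges τ σ → Converges (Trace.cons σ' τ) σ

/-- Infiniteness of a trace (coinductive, as a greatest fixed point). -/
def InfiniteT (τ : Trace) : Prop :=
  ∃ P : Trace → Prop, P τ ∧ ∀ a, P a → ∃ σ a', a = Trace.cons σ a' ∧ P a'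

/-- Statements of the While language. -/
inductive Stmt : Type
  | assign (x : Var) (e : Expr)
  | skip
  | seq (s₀ s₁ : Stmt)
  | ifte (e : Expr) (st sf : Stmt)
  | whileDo (e : Expr) (st : Stmt)

/-- A pair of relations `(E, ES)` is consistent with the rules of evaluation
and extended evaluation: every claimed evaluation is backed by one of the
coinductive rules, with premises again in `(E, ES)`. -/
def EvalConsistent (E : Stmt → State → Trace → Prop)
    (ES : Stmt → Trace → Trace → Prop) : Prop :=
  (∀ x e σ τ, E (.assign x e) σ τ →
      τ = Trace.cons σ (Trace.single (update σ x (e σ)))) ∧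
  (∀ σ τ, E .skip σ τ → τ = Trace.single σ) ∧
  (∀ s₀ s₁ σ τ', E (.seq s₀ s₁) σ τ' → ∃ τ, E s₀ σ τ ∧ ES s₁ τ τ') ∧
  (∀ e st sf σ τ, E (.ifte e st sf) σ τ →
      (istrue e σ ∧ ES st (Trace.cons σ (Trace.single σ)) τ) ∨
      (¬ istrue e σ ∧ ES sf (Trace.cons σ (Trace.single σ)) τ)) ∧
  (∀ e st σ τ', E (.whileDo e st) σ τ' →
      (istrue e σ ∧ ∃ τ, ES st (Trace.cons σ (Trace.single σ)) τ ∧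
        ES (.whileDo e st) τ τ') ∨
      (¬ istrue e σ ∧ τ' = Trace.cons σ (Trace.single σ))) ∧
  (∀ s τ τ', ES s τ τ' →
      (∃ σ, τ = Trace.single σ ∧ E s σ τ') ∨
      (∃ σ τ₀ τ₀', τ = Trace.cons σ τ₀ ∧ τ' = Trace.cons σ τ₀' ∧ ES s τ₀ τ₀'))

/-- Evaluation `(s,σ) ⇒ τ` : greatest fixed point of the mutual coinductive rules. -/
def Exec (s : Stmt) (σ : State) (τ : Trace) : Prop :=
  ∃ E ES, EvalConsistent E ES ∧ E s σ τ

/-- Extended evaluation `(s,τ) ⇒* τ'`. -/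
def ExecSeq (s : Stmt) (τ τ' : Trace) : Prop :=
  ∃ E ES, EvalConsistent E ES ∧ ES s τ τ'

/-- The standard inductive state-based big-step semantics `(s,σ) ⇓ σ'`. -/
inductive BigStep : Stmt → State → State → Prop
  | assign (x : Var) (e : Expr) (σ : State) :
      BigStep (.assign x e) σ (update σ x (e σ))
  | skip (σ : State) : BigStep .skip σ σ
  | seq {s₀ s₁ : Stmt} {σ σ' σ'' : State} :
      BigStep s₀ σ σ' → BigStep s₁ σ' σ'' → BigStep (.seq s₀ s₁) σ σ''
  | ifTrue {e : Expr} {st sf : Stmt} {σ σ' : State} :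
      istrue e σ → BigStep st σ σ' → BigStep (.ifte e st sf) σ σ'
  | ifFalse {e : Expr} {st sf : Stmt} {σ σ' : State} :
      ¬ istrue e σ → BigStep sf σ σ' → BigStep (.ifte e st sf) σ σ'
  | whileTrue {e : Expr} {st : Stmt} {σ σ' σ'' : State} :
      istrue e σ → BigStep st σ σ' → BigStep (.whileDo e st) σ' σ'' →
      BigStep (.whileDo e st) σ σ''
  | whileFalse {e : Expr} {st : Stmt} {σ : State} :
      ¬ istrue e σ → BigStep (.whileDo e st) σ σ

/-- State predicates. -/
abbrev StatePred := State → Prop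
/-- Trace predicates. -/
abbrev TracePred := Trace → Prop

/-- A setoid trace predicate respects bisimilarity. -/
def IsSetoidPred (P : TracePred) : Prop := ∀ τ τ', P τ → Bisim τ τ' → P τ'

/-- The singleton predicate `[U]`. -/
def Sglt (U : StatePred) : TracePred :=
  fun τ => ∃ σ, U σ ∧ τ = Trace.single σ

/-- The doubleton predicate `⟨U⟩`. -/
def Dup (U : StatePred) : TracePred :=
  fun τ => ∃ σ, U σ ∧ τ = Trace.cons σ (Trace.single σ)

/-- The update predicate `U[x ↦ e]`. -/
def UpdPred (U : StatePred) (x : Var) (e : Expr) : TracePred :=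
  fun τ => ∃ σ, U σ ∧ τ = Trace.cons σ (Trace.single (update σ x (e σ)))

/-- `Q follows τ in τ'` (coinductive, as a greatest fixed point). -/
def Follows (Q : TracePred) (τ τ' : Trace) : Prop :=
  ∃ R : Trace → Trace → Prop, R τ τ' ∧
    ∀ a b, R a b →
      (∃ σ, a = Trace.single σ ∧ b.hd = σ ∧ Q b) ∨
      (∃ σ a' b', a = Trace.cons σ a' ∧ b = Trace.cons σ b' ∧ R a' b')

/-- The chop `P ** Q`. -/
def Chop (P Q : TracePred) : TracePred :=
  fun τ' => ∃ τ, P τ ∧ Follows Q τ τ'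

/-- The iteration `P*` (coinductive, as a greatest fixed point). -/
def Iter (P : TracePred) : TracePred := fun τ =>
  ∃ X : TracePred, X τ ∧
    ∀ a, X a → Sglt (fun _ => True) a ∨ ∃ τ₀, P τ₀ ∧ Follows X τ₀ a

/-- `Last P` : states that are the last state of some finite trace satisfying `P`. -/
def Last (P : TracePred) : StatePred := fun σ => ∃ τ, P τ ∧ Converges τ σ

/-- The trace predicate `finite`. -/
def FiniteT : TracePred := fun τ => ∃ σ, Converges τ σ

/-- Derivability `⊢ {U} s {P}` in the trace-based Hoare logic. -/
inductive THoare : StatePred → Stmt → TracePred → Prop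
  | assign (U : StatePred) (x : Var) (e : Expr) :
      THoare U (.assign x e) (UpdPred U x e)
  | skip (U : StatePred) : THoare U .skip (Sglt U)
  | seq {U V : StatePred} {s₀ s₁ : Stmt} {P Q : TracePred} :
      THoare U s₀ (Chop P (Sglt V)) → THoare V s₁ Q →
      THoare U (.seq s₀ s₁) (Chop P Q)
  | ifte {U : StatePred} {e : Expr} {st sf : Stmt} {P : TracePred} :
      THoare (fun σ => istrue e σ ∧ U σ) st P →
      THoare (fun σ => ¬ istrue e σ ∧ U σ) sf P →
      THoare U (.ifte e st sf) (Chop (Dup U) P)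
  | whileDo {U I : StatePred} {e : Expr} {st : Stmt} {P : TracePred} :
      (∀ σ, U σ → I σ) →
      THoare (fun σ => istrue e σ ∧ I σ) st (Chop P (Sglt I)) →
      THoare U (.whileDo e st)
        (Chop (Dup U)
          (Chop (Iter (Chop P (Dup I))) (Sglt (fun σ => ¬ istrue e σ))))
  | conseq {U U' : StatePred} {s : Stmt} {P P' : TracePred} :
      (∀ σ, U σ → U' σ) → THoare U' s P' → (∀ τ, P' τ → P τ) →
      THoare U s P
  | exist {Z : Type} {U : Z → StatePred} {s : Stmt} {P : Z → TracePred} :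
      (∀ z, THoare (U z) s (P z)) →
      THoare (fun σ => ∃ z, U z σ) s (fun τ => ∃ z, P z τ)

/-- Derivability `⊢p {U} s {Z}` in the state-based partial-correctness Hoare logic. -/
inductive PHoare : StatePred → Stmt → StatePred → Prop
  | assign (Z : StatePred) (x : Var) (e : Expr) :
      PHoare (fun σ => Z (update σ x (e σ))) (.assign x e) Z
  | skip (U : StatePred) : PHoare U .skip U
  | seq {U V Z : StatePred} {s₀ s₁ : Stmt} :
      PHoare U s₀ V → PHoare V s₁ Z → PHoare U (.seq s₀ s₁) Z
  | ifte {U Z : StatePred} {e : Expr} {st sf : Stmt} :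
      PHoare (fun σ => istrue e σ ∧ U σ) st Z →
      PHoare (fun σ => ¬ istrue e σ ∧ U σ) sf Z →
      PHoare U (.ifte e st sf) Z
  | whileDo {I : StatePred} {e : Expr} {st : Stmt} :
      PHoare (fun σ => istrue e σ ∧ I σ) st I →
      PHoare I (.whileDo e st) (fun σ => I σ ∧ ¬ istrue e σ)
  | exist {Z : Type} {U V : Z → StatePred} {s : Stmt} :
      (∀ z, PHoare (U z) s (V z)) →
      PHoare (fun σ => ∃ z, U z σ) s (fun σ => ∃ z, V z σ)
  | conseq {U U' Z Z' : StatePred} {s : Stmt} :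
      (∀ σ, U σ → U' σ) → PHoare U' s Z' → (∀ σ, Z' σ → Z σ) →
      PHoare U s Z

/-- Derivability `⊢t {U} s {Z}` in the state-based total-correctness Hoare
logic, with the `while-fun` rule. -/
inductive TotHoare : StatePred → Stmt → StatePred → Prop
  | assign (Z : StatePred) (x : Var) (e : Expr) :
      TotHoare (fun σ => Z (update σ x (e σ))) (.assign x e) Z
  | skip (U : StatePred) : TotHoare U .skip U
  | seq {U V Z : StatePred} {s₀ s₁ : Stmt} :
      TotHoare U s₀ V → TotHoare V s₁ Z → TotHoare U (.seq s₀ s₁) Z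
  | ifte {U Z : StatePred} {e : Expr} {st sf : Stmt} :
      TotHoare (fun σ => istrue e σ ∧ U σ) st Z →
      TotHoare (fun σ => ¬ istrue e σ ∧ U σ) sf Z →
      TotHoare U (.ifte e st sf) Z
  | whileFun {I : StatePred} {e : Expr} {st : Stmt} (t : State → ℕ) (m : ℕ) :
      (∀ n : ℕ, TotHoare (fun σ => istrue e σ ∧ I σ ∧ t σ = n) st
        (fun σ => I σ ∧ t σ < n)) →
      TotHoare (fun σ => I σ ∧ t σ = m) (.whileDo e st)
        (fun σ => I σ ∧ t σ ≤ m ∧ ¬ istrue e σ)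
  | exist {Z : Type} {U V : Z → StatePred} {s : Stmt} :
      (∀ z, TotHoare (U z) s (V z)) →
      TotHoare (fun σ => ∃ z, U z σ) s (fun σ => ∃ z, V z σ)
  | conseq {U U' Z Z' : StatePred} {s : Stmt} :
      (∀ σ, U σ → U' σ) → TotHoare U' s Z' → (∀ σ, Z' σ → Z σ) →
      TotHoare U s Z

namespace Trace

lemma cons_ne_single (σ σ' : State) (τ : Trace) : cons σ τ ≠ single σ' :=
  fun h => Stream'.Seq.cons_ne_nil (congrArg Prod.snd h)

lemma cons_injective2 : Function.Injective2 cons := by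
  intro σ σ' τ τ' h
  obtain ⟨hhd, htl⟩ := Stream'.Seq.cons_injective2 (congrArg Prod.snd h)
  exact ⟨congrArg Prod.fst h, Prod.ext hhd htl⟩

end Trace

lemma Converges.eq_of_single {σ σf : State} (h : Converges (Trace.single σ) σf) : σf = σ := by
  generalize hτ : Trace.single σ = τ at h
  cases h with
  | single => exact congrArg Prod.fst hτ.symm
  | cons => exact absurd hτ.symm (Trace.cons_ne_single _ _ _)

namespace Follows

variable {Q : TracePred}

lemma cases {τ τ' : Trace} (h : Follows Q τ τ') :
    (∃ σ, τ = Trace.single σ ∧ τ'.hd = σ ∧ Q τ') ∨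
      ∃ σ a b, τ = Trace.cons σ a ∧ τ' = Trace.cons σ b ∧ Follows Q a b := by
  obtain ⟨R, hR, hRcons⟩ := h
  rcases hRcons τ τ' hR with hsingle | ⟨σ, a, b, ha, hb, hab⟩
  · exact Or.inl hsingle
  · exact Or.inr ⟨σ, a, b, ha, hb, R, hab, hRcons⟩

lemma hd_eq {τ τ' : Trace} (h : Follows Q τ τ') : τ'.hd = τ.hd := by
  rcases h.cases with ⟨σ, rfl, hhd, -⟩ | ⟨σ, a, b, rfl, rfl, -⟩
  · exact hhd
  · rfl

lemma mono {Q' : TracePred} (hQ : ∀ τ, Q τ → Q' τ) {τ τ' : Trace} (h : Follows Q τ τ') :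
    Follows Q' τ τ' := by
  obtain ⟨R, hR, hRcons⟩ := h
  refine ⟨R, hR, fun a b hab => ?_⟩
  rcases hRcons a b hab with ⟨σ, ha, hhd, hb⟩ | hcons
  · exact Or.inl ⟨σ, ha, hhd, hQ b hb⟩
  · exact Or.inr hcons

lemma single {σ : State} {τ : Trace} (hhd : τ.hd = σ) (hQ : Q τ) :
    Follows Q (Trace.single σ) τ :=
  ⟨fun a b => a = Trace.single σ ∧ b = τ, ⟨rfl, rfl⟩,
    fun _ _ ⟨ha, hb⟩ => Or.inl ⟨σ, ha, hb ▸ hhd, hb ▸ hQ⟩⟩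

lemma cons (σ : State) {τ τ' : Trace} (h : Follows Q τ τ') :
    Follows Q (Trace.cons σ τ) (Trace.cons σ τ') := by
  obtain ⟨R, hR, hRcons⟩ := h
  refine ⟨fun a b => (a = Trace.cons σ τ ∧ b = Trace.cons σ τ') ∨ R a b,
    Or.inl ⟨rfl, rfl⟩, fun a b hab => ?_⟩
  rcases hab with ⟨ha, hb⟩ | hab
  · exact Or.inr ⟨σ, τ, τ', ha, hb, Or.inr hR⟩
  · rcases hRcons a b hab with hsingle | ⟨σ', a', b', ha, hb, hab'⟩
    · exact Or.inl hsingle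
    · exact Or.inr ⟨σ', a', b', ha, hb, Or.inr hab'⟩

end Follows

def LastFrom (P : TracePred) (ρ : State) : StatePred :=
  fun σ => ∃ τ, P τ ∧ τ.hd = ρ ∧ Converges τ σ

lemma LastFrom.mono {P P' : TracePred} (hP : ∀ τ, P τ → P' τ) {ρ σ : State}
    (h : LastFrom P ρ σ) : LastFrom P' ρ σ :=
  let ⟨τ, hτ, hhd, hconv⟩ := h
  ⟨τ, hP τ hτ, hhd, hconv⟩

lemma LastFrom.last {P : TracePred} {ρ σ : State} (h : LastFrom P ρ σ) : Last P σ :=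
  let ⟨τ, hτ, _, hconv⟩ := h
  ⟨τ, hτ, hconv⟩

lemma lastFrom_sglt_iff {V : StatePred} {ρ σ : State} :
    LastFrom (Sglt V) ρ σ ↔ V σ ∧ ρ = σ := by
  constructor
  · rintro ⟨_, ⟨σ', hV, rfl⟩, rfl, hconv⟩
    obtain rfl := hconv.eq_of_single
    exact ⟨hV, rfl⟩
  · rintro ⟨hV, rfl⟩
    exact ⟨_, ⟨ρ, hV, rfl⟩, rfl, .single ρ⟩

lemma lastFrom_dup {V : StatePred} {ρ : State} (hV : V ρ) : LastFrom (Dup V) ρ ρ :=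
  ⟨_, ⟨ρ, hV, rfl⟩, rfl, .cons ρ (.single ρ)⟩

lemma Follows.exists_lastFrom_of_converges {Q : TracePred} {τ τ' : Trace} {σ : State}
    (hf : Follows Q τ τ') (hconv : Converges τ' σ) :
    ∃ σ₁, Converges τ σ₁ ∧ LastFrom Q σ₁ σ := by
  induction hconv generalizing τ with
  | single σ' =>
    rcases hf.cases with ⟨σ₁, rfl, hhd, hQ⟩ | ⟨_, _, _, -, hb, -⟩
    · exact ⟨σ₁, .single σ₁, _, hQ, hhd, .single σ'⟩
    · exact absurd hb.symm (Trace.cons_ne_single _ _ _)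
  | cons σ' hconv ih =>
    rcases hf.cases with ⟨σ₁, rfl, hhd, hQ⟩ | ⟨σ'', a, b, rfl, hb, hab⟩
    · exact ⟨σ₁, .single σ₁, _, hQ, hhd, .cons σ' hconv⟩
    · obtain ⟨-, rfl⟩ := Trace.cons_injective2 hb
      obtain ⟨σ₁, ha, hlast⟩ := ih hab
      exact ⟨σ₁, .cons σ'' ha, hlast⟩

lemma exists_follows_of_converges {Q : TracePred} {τ τq : Trace} {σ₁ : State}
    (hconv : Converges τ σ₁) (hQ : Q τq) (hhd : τq.hd = σ₁) :
    ∃ τ', Follows Q τ τ' ∧ ∀ σ, Converges τq σ → Converges τ' σ := by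
  induction hconv with
  | single => exact ⟨τq, .single hhd hQ, fun _ h => h⟩
  | cons σ' _ ih =>
    obtain ⟨τ', hf, hlast⟩ := ih hhd
    exact ⟨.cons σ' τ', hf.cons σ', fun σ h => .cons σ' (hlast σ h)⟩

lemma lastFrom_chop_iff {P Q : TracePred} {ρ σ : State} :
    LastFrom (Chop P Q) ρ σ ↔ ∃ σ₁, LastFrom P ρ σ₁ ∧ LastFrom Q σ₁ σ := by
  constructor
  · rintro ⟨τ', ⟨τ, hP, hf⟩, rfl, hconv⟩
    obtain ⟨σ₁, hτ, hlast⟩ := hf.exists_lastFrom_of_converges hconv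
    exact ⟨σ₁, ⟨τ, hP, hf.hd_eq.symm, hτ⟩, hlast⟩
  · rintro ⟨σ₁, ⟨τ, hP, rfl, hτ⟩, ⟨τq, hQ, hhd, hτq⟩⟩
    obtain ⟨τ', hf, hlast⟩ := exists_follows_of_converges hτ hQ hhd
    exact ⟨τ', ⟨τ, hP, hf⟩, hf.hd_eq, hlast σ hτq⟩

lemma lastFrom_chop {P Q : TracePred} {ρ σ₁ σ : State} (hP : LastFrom P ρ σ₁)
    (hQ : LastFrom Q σ₁ σ) : LastFrom (Chop P Q) ρ σ :=
  lastFrom_chop_iff.2 ⟨σ₁, hP, hQ⟩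

lemma lastFrom_chop_sglt {P : TracePred} {V : StatePred} {ρ σ : State}
    (h : LastFrom (Chop P (Sglt V)) ρ σ) : LastFrom P ρ σ ∧ V σ := by
  obtain ⟨σ₁, hP, hV⟩ := lastFrom_chop_iff.1 h
  obtain ⟨hV, rfl⟩ := lastFrom_sglt_iff.1 hV
  exact ⟨hP, hV⟩

namespace Iter

variable {P : TracePred}

lemma unfold {τ : Trace} (h : Iter P τ) : Sglt (fun _ => True) τ ∨ Chop P (Iter P) τ := by
  obtain ⟨X, hX, hXcons⟩ := h
  rcases hXcons τ hX with hsingle | ⟨τ₀, hP, hf⟩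
  · exact Or.inl hsingle
  · exact Or.inr ⟨τ₀, hP, hf.mono fun τ' hτ' => ⟨X, hτ', hXcons⟩⟩

lemma single (σ : State) : Iter P (Trace.single σ) :=
  ⟨Sglt (fun _ => True), ⟨σ, trivial, rfl⟩, fun _ h => Or.inl h⟩

lemma of_chop {τ : Trace} (h : Chop P (Iter P) τ) : Iter P τ := by
  refine ⟨fun τ' => Chop P (Iter P) τ' ∨ Iter P τ', Or.inl h, fun τ' hτ' => ?_⟩
  have hτ' : Sglt (fun _ => True) τ' ∨ Chop P (Iter P) τ' := hτ'.elim Or.inr unfold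
  rcases hτ' with hsingle | ⟨τ₀, hP, hf⟩
  · exact Or.inl hsingle
  · exact Or.inr ⟨τ₀, hP, hf.mono fun _ => Or.inr⟩

end Iter

namespace PHoare

lemma weaken_post {U Z Z' : StatePred} {s : Stmt} (h : PHoare U s Z') (hZ : ∀ σ, Z' σ → Z σ) :
    PHoare U s Z :=
  conseq (fun _ hσ => hσ) h hZ

lemma of_forall_eq {U Z : StatePred} {s : Stmt} (h : ∀ ρ, U ρ → PHoare (· = ρ) s Z) :
    PHoare U s Z :=
  conseq (fun σ hσ => ⟨⟨σ, hσ⟩, rfl⟩) (exist fun ρ : {ρ // U ρ} => h ρ.1 ρ.2)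
    (fun _ ⟨_, hσ⟩ => hσ)

end PHoare

lemma pHoare_whileDo_lastFrom {U I : StatePred} {e : Expr} {st : Stmt} {P : TracePred}
    (hUI : ∀ σ, U σ → I σ)
    (ih : ∀ ρ, istrue e ρ ∧ I ρ → PHoare (· = ρ) st (LastFrom (Chop P (Sglt I)) ρ))
    {ρ : State} (hU : U ρ) :
    PHoare (· = ρ) (.whileDo e st)
      (LastFrom (Chop (Dup U) (Chop (Iter (Chop P (Dup I))) (Sglt (fun σ => ¬ istrue e σ))))
        ρ) := by
  set Pc := Chop P (Dup I)
  let J : StatePred := fun σ => I σ ∧ ∀ σf, LastFrom (Iter Pc) σ σf → LastFrom (Iter Pc) ρ σf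
  have hbody : PHoare (fun σ => istrue e σ ∧ J σ) st J := by
    refine PHoare.of_forall_eq fun σ₀ ⟨he, hI, hreach⟩ => (ih σ₀ ⟨he, hI⟩).weaken_post ?_
    intro σ hσ
    obtain ⟨hP, hIσ⟩ := lastFrom_chop_sglt hσ
    have hstep : LastFrom Pc σ₀ σ := lastFrom_chop hP (lastFrom_dup hIσ)
    exact ⟨hIσ, fun σf hσf => hreach σf ((lastFrom_chop hstep hσf).mono fun _ => Iter.of_chop)⟩
  refine PHoare.conseq ?_ (PHoare.whileDo hbody) ?_
  · rintro σ rfl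
    exact ⟨hUI σ hU, fun _ h => h⟩
  · rintro σ ⟨⟨-, hreach⟩, he⟩
    have hiter : LastFrom (Iter Pc) ρ σ := hreach σ ⟨_, Iter.single σ, rfl, .single σ⟩
    exact lastFrom_chop (lastFrom_dup hU) (lastFrom_chop hiter (lastFrom_sglt_iff.2 ⟨he, rfl⟩))

lemma pHoare_lastFrom_of_tHoare {U : StatePred} {s : Stmt} {P : TracePred}
    (h : THoare U s P) : ∀ ρ, U ρ → PHoare (· = ρ) s (LastFrom P ρ) := by
  induction h with
  | assign U x e =>
    refine fun ρ hU => PHoare.conseq ?_ (PHoare.assign _ x e) fun _ h => h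
    rintro σ rfl
    exact ⟨_, ⟨σ, hU, rfl⟩, rfl, .cons σ (.single _)⟩
  | skip U =>
    refine fun ρ hU => PHoare.conseq ?_ (PHoare.skip _) fun _ h => h
    rintro σ rfl
    exact lastFrom_sglt_iff.2 ⟨hU, rfl⟩
  | seq _ _ ih₀ ih₁ =>
    refine fun ρ hU => PHoare.seq (ih₀ ρ hU) (PHoare.of_forall_eq fun σ₁ hσ₁ => ?_)
    obtain ⟨hP, hV⟩ := lastFrom_chop_sglt hσ₁
    exact (ih₁ σ₁ hV).weaken_post fun σ hQ => lastFrom_chop hP hQ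
  | ifte _ _ iht ihf =>
    intro ρ hU
    refine PHoare.ifte (PHoare.of_forall_eq ?_) (PHoare.of_forall_eq ?_)
    · rintro σ ⟨he, rfl⟩
      exact (iht σ ⟨he, hU⟩).weaken_post fun _ => lastFrom_chop (lastFrom_dup hU)
    · rintro σ ⟨he, rfl⟩
      exact (ihf σ ⟨he, hU⟩).weaken_post fun _ => lastFrom_chop (lastFrom_dup hU)
  | whileDo hUI _ ih => exact fun ρ hU => pHoare_whileDo_lastFrom hUI ih hU
  | conseq hUU' _ hPP' ih =>
    exact fun ρ hU => (ih ρ (hUU' ρ hU)).weaken_post fun _ => LastFrom.mono hPP'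
  | exist _ ih =>
    rintro ρ ⟨z, hU⟩
    exact (ih z ρ hU).weaken_post fun _ => LastFrom.mono fun τ hτ => ⟨z, hτ⟩

theorem tHoare_project_general (s : Stmt) (U : StatePred) (P : TracePred)
    (h : THoare U s P) : PHoare U s (Last P) :=
  PHoare.of_forall_eq fun ρ hU =>
    (pHoare_lastFrom_of_tHoare h ρ hU).weaken_post fun _ => LastFrom.last

/-- Projection into the partial-correctness Hoare logic. -/
theorem tHoare_project (s : Stmt) (U : StatePred) (P : TracePred)
    (hP : IsSetoidPred P) (h : THoare U s P) : PHoare U s (Last P) :=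
  tHoare_project_general s U P h

end WhileTrace
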